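/- If G is a graph of order n ≥ 2 with maximum degree Δ, then for every t ≥ 2: 2^{t-1}·max(n+2, 2(Δ+2)) - 2 ≤ λ(M^t(G)) ≤ (2^t - 1)(n+1) + λ(G). -/

import Mathlib

open SimpleGraph

abbrev MycVert (V : Type) : Type := V ⊕ V ⊕ Unit

def mycAdj {V : Type} (G : SimpleGraph V) : MycVert V → MycVert V → Prop
  | Sum.inl a, Sum.inl b => G.Adj a b
  | Sum.inl a, Sum.inr (Sum.inl b) => G.Adj a b
  | Sum.inr (Sum.inl a), Sum.inl b => G.Adj a b
  | Sum.inr (Sum.inl _), Sum.inr (Sum.inr _) => True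
  | Sum.inr (Sum.inr _), Sum.inr (Sum.inl _) => True
  | _, _ => False

/-- The Mycielski graph of `G`: `Sum.inl v` are original vertices, `Sum.inr (Sum.inl v)`
their copies, and `Sum.inr (Sum.inr ())` is the root. -/
def mycielski {V : Type} (G : SimpleGraph V) : SimpleGraph (MycVert V) where
  Adj := mycAdj G
  symm := ⟨by
    rintro (a | a | a) (b | b | b) h <;>
      first | exact G.symm h | exact G.adj_symm h | trivial | exact h.elim⟩
  loopless := ⟨by
    rintro (a | a | a) h <;> first | exact G.loopless a h | exact G.irrefl h | exact h⟩

def IterMycVert (V : Type) : ℕ → Type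
  | 0 => V
  | t + 1 => MycVert (IterMycVert V t)

/-- The `t`-th iterated Mycielski graph. -/
def iterMycielski {V : Type} (G : SimpleGraph V) : (t : ℕ) → SimpleGraph (IterMycVert V t)
  | 0 => G
  | t + 1 => mycielski (iterMycielski G t)

instance iterMycVertFintype (V : Type) [Fintype V] : (t : ℕ) → Fintype (IterMycVert V t)
  | 0 => inferInstanceAs (Fintype V)
  | t + 1 => letI := iterMycVertFintype V t
             inferInstanceAs (Fintype (MycVert (IterMycVert V t)))

/-- `f` is an `L(2,1)`-labeling of `G`. -/
def IsL21Labeling {V : Type} (G : SimpleGraph V) (f : V → ℕ) : Prop :=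
  (∀ x y, G.Adj x y → 2 ≤ ((f x : ℤ) - (f y : ℤ)).natAbs) ∧
  (∀ x y, G.dist x y = 2 → f x ≠ f y)

/-- The `L(2,1)`-labeling number `λ(G)`: the least `k` such that `G` has an
`L(2,1)`-labeling with labels in `{0, …, k}`. -/
noncomputable def lambdaNumber {V : Type} (G : SimpleGraph V) : ℕ :=
  sInf {k | ∃ f : V → ℕ, IsL21Labeling G f ∧ ∀ v, f v ≤ k}

/-!
An `L(2,1)`-labeling is injective on every clique of the square `G²`. If `S` is such a clique
with at least two vertices, then in the Mycielskian the originals and copies of `S` together with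
the root form another one, of size `2|S| + 1`; so `|S| + 1` doubles with each Mycielski step and
`λ(M^t(G)) + 2 ≥ 2^i (|S| + 1)` for a clique `S` of `M^(t-i)(G)`. The root with all copies
(`n + 1` vertices of `M(G)`) and a closed neighbourhood of maximum degree (`Δ + 1` vertices
of `G`) give the two lower bounds.

For the upper bound, let `f` be an optimal labeling of `G` with top label `s`. On `M(G)`, move the
originals labelled `s` up to `s + 1`, put `s` on the root and `s + 2, …, s + n + 1` on the copies,
with `s + 2` on the copy of a vertex labelled `s`, whose neighbours carry labels at most `s - 2`.
Hence `λ(M(G)) ≤ λ(G) + n + 1`, and summing over `|V(M^t(G))| + 1 = 2^t (n + 1)` gives the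
bound.
-/

open Finset

namespace SimpleGraph

variable {V : Type} {G : SimpleGraph V}

lemma dist_eq_two_iff {u v : V} :
    G.dist u v = 2 ↔ u ≠ v ∧ ¬ G.Adj u v ∧ (G.commonNeighbors u v).Nonempty := by
  rw [← edist_eq_two_iff, dist, ENat.toNat_eq_iff two_ne_zero]
  rfl

def square (G : SimpleGraph V) : SimpleGraph V where
  Adj x y := x ≠ y ∧ (G.Adj x y ∨ (G.commonNeighbors x y).Nonempty)
  symm := ⟨fun x y h => ⟨h.1.symm, h.2.imp G.adj_symm (commonNeighbors_symm G x y ▸ id)⟩⟩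
  loopless := ⟨fun _ h => h.1 rfl⟩

lemma IsClique.exists_adj_of_square {S : Set V} (hS : G.square.IsClique S)
    (hnt : S.Nontrivial) {x : V} (hx : x ∈ S) : ∃ z, G.Adj x z := by
  obtain ⟨y, hy, hyx⟩ := hnt.exists_ne x
  rcases (hS hx hy hyx.symm).2 with hadj | ⟨z, hz⟩
  · exact ⟨y, hadj⟩
  · exact ⟨z, (G.mem_commonNeighbors.1 hz).1⟩

lemma isClique_square_insert_neighborSet (v : V) :
    G.square.IsClique (insert v (G.neighborSet v)) := by
  rintro x (rfl | hx) y (rfl | hy) hxy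
  · exact absurd rfl hxy
  · exact ⟨hxy, Or.inl hy⟩
  · exact ⟨hxy, Or.inl (G.adj_symm hx)⟩
  · exact ⟨hxy, Or.inr ⟨v, G.adj_symm hx, G.adj_symm hy⟩⟩

end SimpleGraph

open SimpleGraph

section Labeling

variable {V : Type} {G : SimpleGraph V} {f : V → ℕ}

lemma IsL21Labeling.ne_of_adj (hf : IsL21Labeling G f) {x y : V} (h : G.Adj x y) :
    f x ≠ f y := by
  have := hf.1 x y h
  omega

lemma IsL21Labeling.ne_of_commonNeighbors_nonempty (hf : IsL21Labeling G f) {x y : V}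
    (hxy : x ≠ y) (hz : (G.commonNeighbors x y).Nonempty) : f x ≠ f y := by
  by_cases hadj : G.Adj x y
  · exact hf.ne_of_adj hadj
  · exact hf.2 x y (dist_eq_two_iff.2 ⟨hxy, hadj, hz⟩)

lemma isL21Labeling_two_mul {e : V → ℕ} (he : Function.Injective e) :
    IsL21Labeling G (fun x => 2 * e x) := by
  refine ⟨fun x y h => ?_, fun x y h => ?_⟩
  · have := he.ne (G.ne_of_adj h)
    beta_reduce
    omega
  · have := he.ne (dist_eq_two_iff.1 h).1
    beta_reduce
    omega

lemma lambdaNumber_le {k : ℕ} (hf : IsL21Labeling G f) (hk : ∀ v, f v ≤ k) :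
    lambdaNumber G ≤ k :=
  Nat.sInf_le ⟨f, hf, hk⟩

lemma exists_isL21Labeling_le_lambdaNumber [Finite V] (G : SimpleGraph V) :
    ∃ f, IsL21Labeling G f ∧ ∀ v, f v ≤ lambdaNumber G := by
  obtain ⟨n, ⟨e⟩⟩ := Finite.exists_equiv_fin V
  have hbounded : {k | ∃ f : V → ℕ, IsL21Labeling G f ∧ ∀ v, f v ≤ k}.Nonempty :=
    ⟨2 * n, fun x => 2 * e x, isL21Labeling_two_mul (Fin.val_injective.comp e.injective),
      fun x => by have := (e x).isLt; beta_reduce; omega⟩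
  exact Nat.sInf_mem hbounded

lemma IsL21Labeling.injOn (hf : IsL21Labeling G f) {S : Set V} (hS : G.square.IsClique S) :
    S.InjOn f := by
  intro x hx y hy hfxy
  by_contra hxy
  rcases (hS hx hy hxy).2 with hadj | hcommon
  · exact hf.ne_of_adj hadj hfxy
  · exact hf.ne_of_commonNeighbors_nonempty hxy hcommon hfxy

lemma SimpleGraph.IsClique.card_le_lambdaNumber_add_one [Finite V] {S : Finset V}
    (hS : G.square.IsClique S) : #S ≤ lambdaNumber G + 1 := by
  obtain ⟨f, hf, hle⟩ := exists_isL21Labeling_le_lambdaNumber G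
  calc #S = #(S.image f) := (card_image_of_injOn (hf.injOn hS)).symm
    _ ≤ #(range (lambdaNumber G + 1)) :=
      card_le_card fun m hm => by
        obtain ⟨v, -, rfl⟩ := mem_image.1 hm
        exact mem_range_succ_iff.2 (hle v)
    _ = lambdaNumber G + 1 := card_range _

lemma IsL21Labeling.raise_max (hf : IsL21Labeling G f) {s : ℕ}
    (hs : ∀ x, f x ≤ s) : IsL21Labeling G (fun x => if f x = s then s + 1 else f x) := by
  refine ⟨fun x y h => ?_, fun x y h => ?_⟩
  · have := hf.1 x y h
    have := hs x
    have := hs y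
    beta_reduce
    split_ifs <;> omega
  · have := hf.2 x y h
    have := hs x
    have := hs y
    beta_reduce
    split_ifs <;> omega

end Labeling

section Mycielski

variable {V : Type} {G : SimpleGraph V}

def mycielskiFinset (S : Finset V) : Finset (MycVert V) :=
  S.disjSum (S.disjSum {()})

lemma card_mycielskiFinset_add_one (S : Finset V) :
    #(mycielskiFinset S) + 1 = 2 * (#S + 1) := by
  simp only [mycielskiFinset, card_disjSum, card_singleton]
  ring

lemma nontrivial_mycielskiFinset {S : Finset V} (hS : S.Nonempty) :
    (mycielskiFinset S).Nontrivial := by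
  obtain ⟨a, ha⟩ := hS
  refine ⟨Sum.inl a, ?_, Sum.inr (Sum.inr ()), ?_, Sum.inl_ne_inr⟩ <;>
    simp [mycielskiFinset, ha]

lemma SimpleGraph.IsClique.mycielskiFinset {S : Finset V} (hS : G.square.IsClique S)
    (hnt : S.Nontrivial) : (mycielski G).square.IsClique (mycielskiFinset S) := by
  have original_copy : ∀ a ∈ S, ∀ b ∈ S,
      (mycielski G).square.Adj (Sum.inl a) (Sum.inr (Sum.inl b)) := by
    intro a ha b hb
    refine ⟨Sum.inl_ne_inr, ?_⟩
    by_cases hab : a = b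
    · subst hab
      obtain ⟨z, hz⟩ := hS.exists_adj_of_square hnt ha
      exact Or.inr ⟨Sum.inl z, hz, hz⟩
    · rcases (hS ha hb hab).2 with hadj | ⟨z, hz⟩
      · exact Or.inl hadj
      · exact Or.inr ⟨Sum.inl z, hz⟩
  have original_root :
      ∀ a ∈ S, (mycielski G).square.Adj (Sum.inl a) (Sum.inr (Sum.inr ())) := by
    intro a ha
    obtain ⟨z, hz⟩ := hS.exists_adj_of_square hnt ha
    exact ⟨Sum.inl_ne_inr, Or.inr ⟨Sum.inr (Sum.inl z), hz, trivial⟩⟩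
  rintro (a | a | ⟨⟩) ha (b | b | ⟨⟩) hb hab <;>
    simp only [_root_.mycielskiFinset, mem_coe, inl_mem_disjSum, inr_mem_disjSum] at ha hb
  · rcases (hS ha hb fun h => hab (congrArg _ h)).2 with hadj | ⟨z, hz⟩
    exacts [⟨hab, Or.inl hadj⟩, ⟨hab, Or.inr ⟨Sum.inl z, hz⟩⟩]
  · exact original_copy a ha b hb
  · exact original_root a ha
  · exact (original_copy b hb a ha).symm
  · exact ⟨hab, Or.inr ⟨Sum.inr (Sum.inr ()), trivial, trivial⟩⟩
  · exact ⟨hab, Or.inl trivial⟩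
  · exact (original_root b hb).symm
  · exact ⟨hab, Or.inl trivial⟩
  · exact absurd rfl hab

lemma isClique_square_mycielski_map_inr [Fintype V] (G : SimpleGraph V) :
    (mycielski G).square.IsClique
      (univ.map (Function.Embedding.inr : V ⊕ Unit ↪ MycVert V)) := by
  intro p hp q hq hpq
  simp only [coe_map, coe_univ, Set.image_univ, Set.mem_range,
    Function.Embedding.inr_apply] at hp hq
  obtain ⟨a | ⟨⟩, rfl⟩ := hp <;> obtain ⟨b | ⟨⟩, rfl⟩ := hq
  · exact ⟨hpq, Or.inr ⟨Sum.inr (Sum.inr ()), trivial, trivial⟩⟩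
  · exact ⟨hpq, Or.inl trivial⟩
  · exact ⟨hpq, Or.inl trivial⟩
  · exact absurd rfl hpq

lemma isL21Labeling_mycielski_sumElim {a b : V → ℕ} {r : ℕ} (ha : IsL21Labeling G a)
    (hab : ∀ x y, G.Adj x y → 2 ≤ ((a x : ℤ) - b y).natAbs) (hb : Function.Injective b)
    (hbr : ∀ x, 2 ≤ ((b x : ℤ) - r).natAbs) (har : ∀ x, a x ≠ r)
    (hba : ∀ x y, a x ≠ b y) :
    IsL21Labeling (mycielski G) (Sum.elim a (Sum.elim b fun _ => r)) := by
  refine ⟨?_, ?_⟩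
  · rintro (x | x | ⟨⟩) (y | y | ⟨⟩) h
    · exact ha.1 x y h
    · exact hab x y h
    · exact h.elim
    · have := hab y x (G.adj_symm h)
      simp only [Sum.elim_inl, Sum.elim_inr]
      omega
    · exact h.elim
    · exact hbr x
    · exact h.elim
    · have := hbr y
      simp only [Sum.elim_inl, Sum.elim_inr]
      omega
    · exact h.elim
  · rintro (x | x | ⟨⟩) (y | y | ⟨⟩) h
    · obtain ⟨hxy, -, z, hz⟩ := dist_eq_two_iff.1 h
      have hcommon : (G.commonNeighbors x y).Nonempty := by
        rcases z with c | c | ⟨⟩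
        exacts [⟨c, hz⟩, ⟨c, hz⟩, hz.1.elim]
      exact ha.ne_of_commonNeighbors_nonempty (fun h => hxy (congrArg _ h)) hcommon
    · exact hba x y
    · exact har x
    · exact (hba y x).symm
    · exact hb.ne fun hxy => (dist_eq_two_iff.1 h).1 (by rw [hxy])
    · have := hbr x
      simp only [Sum.elim_inl, Sum.elim_inr]
      omega
    · exact (har y).symm
    · have := hbr y
      simp only [Sum.elim_inl, Sum.elim_inr]
      omega
    · simp at h

lemma exists_injective_lt_card_apply_eq_zero [Fintype V] (x₀ : V) :
    ∃ e : V → ℕ, Function.Injective e ∧ e x₀ = 0 ∧ ∀ x, e x < Fintype.card V := by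
  classical
  let y₀ := (Fintype.equivFin V).symm ⟨0, Fintype.card_pos_iff.2 ⟨x₀⟩⟩
  let σ := (Equiv.swap x₀ y₀).trans (Fintype.equivFin V)
  exact ⟨fun x => σ x, Fin.val_injective.comp σ.injective, by simp [σ, y₀], fun x => (σ x).isLt⟩

lemma lambdaNumber_mycielski_le [Fintype V] [Nonempty V] (G : SimpleGraph V) :
    lambdaNumber (mycielski G) ≤ lambdaNumber G + Fintype.card V + 1 := by
  obtain ⟨f, hf, hfle⟩ := exists_isL21Labeling_le_lambdaNumber G
  obtain ⟨x₀, hx₀⟩ := Finite.exists_max f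
  obtain ⟨e, he, hex₀, hlt⟩ := exists_injective_lt_card_apply_eq_zero x₀
  set s := f x₀
  have ha_le : ∀ x, (if f x = s then s + 1 else f x) ≤ s + 1 := fun x => by
    have := hx₀ x
    split_ifs <;> omega
  have ha_ne : ∀ x, (if f x = s then s + 1 else f x) ≠ s := fun x => by
    split_ifs <;> omega
  have hgap : ∀ x y, G.Adj x y →
      2 ≤ (((if f x = s then s + 1 else f x : ℕ) : ℤ) - (s + 2 + e y : ℕ)).natAbs := by
    intro x y hxy
    by_cases hy : y = x₀
    · subst hy
      have := hf.1 x _ hxy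
      have := hx₀ x
      split_ifs <;> omega
    · have := he.ne hy
      have := ha_le x
      omega
  have hlabel := isL21Labeling_mycielski_sumElim (r := s) (hf.raise_max hx₀) hgap
    ((add_right_injective (s + 2)).comp he) (fun x => by omega) ha_ne
    (fun x y => by have := ha_le x; omega)
  refine (lambdaNumber_le (k := s + Fintype.card V + 1) hlabel ?_).trans
    (by have := hfle x₀; omega)
  rintro (x | x | ⟨⟩)
  · exact (ha_le x).trans (by omega)
  · have := hlt x
    simp only [Sum.elim_inl, Sum.elim_inr]
    omega
  · simp only [Sum.elim_inr]
    omega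

end Mycielski

section Iterated

instance IterMycVert.instNonempty (V : Type) [Nonempty V] : (t : ℕ) → Nonempty (IterMycVert V t)
  | 0 => ‹Nonempty V›
  | _ + 1 => ⟨Sum.inr (Sum.inr ())⟩

lemma card_iterMycVert_add_one (V : Type) [Fintype V] (t : ℕ) :
    Fintype.card (IterMycVert V t) + 1 = 2 ^ t * (Fintype.card V + 1) := by
  induction t with
  | zero =>
    rw [pow_zero, one_mul]
    rfl
  | succ t ih =>
    show Fintype.card (MycVert (IterMycVert V t)) + 1 = _
    rw [Fintype.card_sum, Fintype.card_sum, Fintype.card_unit, pow_succ]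
    linarith

variable {V : Type}

lemma exists_isClique_square_iterMycielski (G : SimpleGraph V) {j : ℕ}
    {S : Finset (IterMycVert V j)} (hS : (iterMycielski G j).square.IsClique S)
    (hnt : S.Nontrivial) (i : ℕ) :
    ∃ T : Finset (IterMycVert V (j + i)), (iterMycielski G (j + i)).square.IsClique T ∧
      T.Nontrivial ∧ #T + 1 = 2 ^ i * (#S + 1) := by
  induction i with
  | zero => exact ⟨S, hS, hnt, by rw [pow_zero, one_mul]⟩
  | succ i ih =>
    obtain ⟨T, hT, hTnt, hcard⟩ := ih
    refine ⟨mycielskiFinset T, hT.mycielskiFinset hTnt,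
      nontrivial_mycielskiFinset hTnt.nonempty,
      (card_mycielskiFinset_add_one T).trans (by rw [hcard, pow_succ]; ring)⟩

lemma two_pow_mul_le_lambdaNumber_iterMycielski_add_two [Fintype V]
    (G : SimpleGraph V) {j : ℕ} {S : Finset (IterMycVert V j)}
    (hS : (iterMycielski G j).square.IsClique S) (hnt : S.Nontrivial) {i t : ℕ}
    (hjit : j + i = t) : 2 ^ i * (#S + 1) ≤ lambdaNumber (iterMycielski G t) + 2 := by
  subst hjit
  obtain ⟨T, hT, -, hcard⟩ := exists_isClique_square_iterMycielski G hS hnt i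
  have := hT.card_le_lambdaNumber_add_one
  omega

lemma two_pow_mul_card_add_two_le_lambdaNumber_iterMycielski_add_two [Fintype V]
    [Nonempty V] (G : SimpleGraph V) {t : ℕ} (ht : 1 ≤ t) :
    2 ^ (t - 1) * (Fintype.card V + 2) ≤ lambdaNumber (iterMycielski G t) + 2 := by
  have hcard : #(univ.map (Function.Embedding.inr : V ⊕ Unit ↪ MycVert V)) + 1 =
      Fintype.card V + 2 := by
    simp [Fintype.card_sum]
  have hnt : (univ.map (Function.Embedding.inr : V ⊕ Unit ↪ MycVert V)).Nontrivial :=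
    ⟨Sum.inr (Sum.inr ()), by simp, Sum.inr (Sum.inl (Classical.arbitrary V)), by simp,
      by simp⟩
  rw [← hcard]
  exact two_pow_mul_le_lambdaNumber_iterMycielski_add_two (j := 1) G
    (isClique_square_mycielski_map_inr G) hnt (by omega)

lemma two_pow_mul_degree_add_two_le_lambdaNumber_iterMycielski_add_two [Fintype V]
    (G : SimpleGraph V) {v : V} [Fintype (G.neighborSet v)] (hv : 0 < G.degree v) (t : ℕ) :
    2 ^ t * (G.degree v + 2) ≤ lambdaNumber (iterMycielski G t) + 2 := by
  classical
  have hv' : v ∉ G.neighborFinset v := G.notMem_neighborFinset_self v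
  obtain ⟨y, hy⟩ := card_pos.1 ((G.card_neighborFinset_eq_degree v).symm ▸ hv)
  have hcard : #(insert v (G.neighborFinset v)) + 1 = G.degree v + 2 := by
    rw [card_insert_of_notMem hv', card_neighborFinset_eq_degree]
  have hnt : (insert v (G.neighborFinset v)).Nontrivial :=
    ⟨v, mem_insert_self _ _, y, mem_insert_of_mem hy, fun h => hv' (h ▸ hy)⟩
  have hS : G.square.IsClique (insert v (G.neighborFinset v) : Finset V) := by
    rw [coe_insert, coe_neighborFinset]
    exact isClique_square_insert_neighborSet v
  rw [← hcard]
  exact two_pow_mul_le_lambdaNumber_iterMycielski_add_two (j := 0) G hS hnt (zero_add t)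

lemma lambdaNumber_iterMycielski_add_le [Fintype V] [Nonempty V]
    (G : SimpleGraph V) (t : ℕ) :
    lambdaNumber (iterMycielski G t) + (Fintype.card V + 1) ≤
      2 ^ t * (Fintype.card V + 1) + lambdaNumber G := by
  induction t with
  | zero =>
    rw [pow_zero, one_mul, add_comm]
    rfl
  | succ t ih =>
    have hstep := lambdaNumber_mycielski_le (iterMycielski G t)
    have hcard := card_iterMycVert_add_one V t
    rw [pow_succ, mul_comm _ 2, mul_assoc]
    exact (Nat.add_le_add_right hstep _).trans (by omega)

lemma lambdaNumber_iterMycielski_le [Fintype V] [Nonempty V]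
    (G : SimpleGraph V) (t : ℕ) :
    lambdaNumber (iterMycielski G t) ≤ (2 ^ t - 1) * (Fintype.card V + 1) + lambdaNumber G := by
  have := lambdaNumber_iterMycielski_add_le G t
  rw [Nat.sub_one_mul]
  omega

end Iterated

open scoped Classical in
/-- If `G` is a graph of order `n ≥ 2` with maximum degree `Δ`, then for every `t ≥ 2`:
`2^(t-1) * max (n+2) (2(Δ+2)) - 2 ≤ λ(M^t(G)) ≤ (2^t - 1)(n+1) + λ(G)`. -/
theorem lambdaNumber_iterMycielski_bounds {V : Type} [Fintype V] (G : SimpleGraph V)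
    (n : ℕ) (hn : Fintype.card V = n) (h2 : 2 ≤ n) (t : ℕ) (ht : 2 ≤ t) :
    2 ^ (t - 1) * max (n + 2) (2 * (G.maxDegree + 2)) - 2 ≤
        lambdaNumber (iterMycielski G t) ∧
    lambdaNumber (iterMycielski G t) ≤ (2 ^ t - 1) * (n + 1) + lambdaNumber G := by
  subst hn
  have : Nonempty V := Fintype.card_pos_iff.1 (by omega)
  have hstar := two_pow_mul_card_add_two_le_lambdaNumber_iterMycielski_add_two G
    (by omega : 1 ≤ t)
  refine ⟨tsub_le_iff_right.2 ?_, lambdaNumber_iterMycielski_le G t⟩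
  rw [mul_max_of_nonneg _ _ (Nat.zero_le _)]
  refine max_le hstar ?_
  rcases Nat.eq_zero_or_pos G.maxDegree with hzero | hpos
  · refine le_trans ?_ hstar
    rw [hzero]
    gcongr
    omega
  · obtain ⟨v, hv⟩ := G.exists_maximal_degree_vertex
    calc 2 ^ (t - 1) * (2 * (G.maxDegree + 2)) = 2 ^ t * (G.degree v + 2) := by
          rw [hv, ← mul_assoc, ← pow_succ, Nat.sub_add_cancel (by omega : 1 ≤ t)]
      _ ≤ _ :=
        two_pow_mul_degree_add_two_le_lambdaNumber_iterMycielski_add_two G (hv ▸ hpos) t
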